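/- Let n ≥ 3 be an integer, α > 0, β < 0 real numbers, and set c = αⁿ·(n−2)^{n−2}/(n+2)^{n−2}. Consider F_n(α, β, t) = (n/2 + 1)·t^{n/2} − α·(n/2)·t^{n/2−1} − β for t > 0. Then: (a) if β² > c, the equation F_n(α, β, t) = 0 has no solution t > 0; (b) if β² = c, it has exactly one solution t > 0, namely t = α·(n−2)/(n+2); (c) if β² < c, it has exactly two solutions t > 0. -/
import Mathlib

open Real Set

/-- `FF n α β t = (n/2 + 1) t^{n/2} − α (n/2) t^{n/2−1} − β`, with real powers of
the positive real `t`. -/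
noncomputable def FF (n : ℕ) (α β t : ℝ) : ℝ :=
  ((n : ℝ) / 2 + 1) * t ^ ((n : ℝ) / 2) - α * ((n : ℝ) / 2) * t ^ ((n : ℝ) / 2 - 1) - β

/-- Generalized function: `GG p α β t = (p+1) t^p − α p t^{p-1} − β`. -/
noncomputable def GG (p α β t : ℝ) : ℝ :=
  (p + 1) * t ^ p - α * p * t ^ (p - 1) - β

lemma FF_eq_GG (n : ℕ) (α β : ℝ) : FF n α β = GG ((n : ℝ) / 2) α β := rfl

lemma rpow_succ_aux (t a : ℝ) (ht : 0 < t) : t ^ (a + 1) = t ^ a * t := by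
  rw [Real.rpow_add ht, Real.rpow_one]

lemma GG_hasDerivAt (p α β t : ℝ) (ht : 0 < t) :
    HasDerivAt (GG p α β)
      ((p + 1) * (p * t ^ (p - 1)) - α * p * ((p - 1) * t ^ (p - 1 - 1))) t := by
  have h1 : HasDerivAt (fun x : ℝ => x ^ p) (p * t ^ (p - 1)) t :=
    Real.hasDerivAt_rpow_const (Or.inl ht.ne')
  have h2 : HasDerivAt (fun x : ℝ => x ^ (p - 1)) ((p - 1) * t ^ (p - 1 - 1)) t :=
    Real.hasDerivAt_rpow_const (Or.inl ht.ne')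
  exact ((h1.const_mul (p + 1)).sub (h2.const_mul (α * p))).sub_const β

lemma GG_continuous (p α β : ℝ) (hp : (3:ℝ)/2 ≤ p) : Continuous (GG p α β) := by
  have h1 : Continuous fun x : ℝ => x ^ p := by
    rw [continuous_iff_continuousAt]
    intro x
    exact Real.continuousAt_rpow_const x p (Or.inr (by linarith))
  have h2 : Continuous fun x : ℝ => x ^ (p - 1) := by
    rw [continuous_iff_continuousAt]
    intro x
    exact Real.continuousAt_rpow_const x (p - 1) (Or.inr (by linarith))
  exact ((continuous_const.mul h1).sub (continuous_const.mul h2)).sub continuous_const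

lemma GG_deriv_factor (p α t : ℝ) (ht : 0 < t) :
    (p + 1) * (p * t ^ (p - 1)) - α * p * ((p - 1) * t ^ (p - 1 - 1))
      = p * t ^ (p - 1 - 1) * ((p + 1) * t - α * (p - 1)) := by
  have h : t ^ (p - 1) = t ^ (p - 1 - 1) * t := by
    have := rpow_succ_aux t (p - 1 - 1) ht
    rw [show p - 1 - 1 + 1 = p - 1 by ring] at this
    exact this
  rw [h]; ring

lemma GG_strictAntiOn (p α β : ℝ) (hp : (3:ℝ)/2 ≤ p) (hα : 0 < α) :
    StrictAntiOn (GG p α β) (Icc 0 (α * (p - 1) / (p + 1))) := by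
  apply strictAntiOn_of_deriv_neg (convex_Icc _ _) (GG_continuous p α β hp).continuousOn
  intro x hx
  rw [interior_Icc] at hx
  have hx0 : 0 < x := hx.1
  rw [(GG_hasDerivAt p α β x hx0).deriv, GG_deriv_factor p α x hx0]
  have h1 : 0 < p * x ^ (p - 1 - 1) := by
    have := Real.rpow_pos_of_pos hx0 (p - 1 - 1)
    nlinarith
  have h2 : (p + 1) * x - α * (p - 1) < 0 := by
    have hlt : x < α * (p - 1) / (p + 1) := hx.2
    rw [lt_div_iff₀ (by linarith : (0:ℝ) < p + 1)] at hlt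
    nlinarith
  nlinarith

lemma GG_strictMonoOn (p α β : ℝ) (hp : (3:ℝ)/2 ≤ p) (hα : 0 < α) :
    StrictMonoOn (GG p α β) (Ici (α * (p - 1) / (p + 1))) := by
  apply strictMonoOn_of_deriv_pos (convex_Ici _) (GG_continuous p α β hp).continuousOn
  intro x hx
  rw [interior_Ici] at hx
  have ht0 : 0 < α * (p - 1) / (p + 1) :=
    div_pos (mul_pos hα (by linarith)) (by linarith)
  have hx0 : 0 < x := lt_trans ht0 hx
  rw [(GG_hasDerivAt p α β x hx0).deriv, GG_deriv_factor p α x hx0]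
  have h1 : 0 < p * x ^ (p - 1 - 1) := by
    have := Real.rpow_pos_of_pos hx0 (p - 1 - 1)
    nlinarith
  have h2 : 0 < (p + 1) * x - α * (p - 1) := by
    have hlt : α * (p - 1) / (p + 1) < x := hx
    rw [div_lt_iff₀ (by linarith : (0:ℝ) < p + 1)] at hlt
    nlinarith
  nlinarith

lemma GG_at_min (p α β : ℝ) (hp : (3:ℝ)/2 ≤ p) (hα : 0 < α) :
    GG p α β (α * (p - 1) / (p + 1))
      = -(α * (α * (p - 1) / (p + 1)) ^ (p - 1)) - β := by
  set t₀ := α * (p - 1) / (p + 1) with ht₀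
  have ht0 : 0 < t₀ := div_pos (mul_pos hα (by linarith)) (by linarith)
  have hpow : t₀ ^ p = t₀ ^ (p - 1) * t₀ := by
    have := rpow_succ_aux t₀ (p - 1) ht0
    rw [show p - 1 + 1 = p by ring] at this
    exact this
  have hkey : (p + 1) * t₀ = α * (p - 1) := by
    rw [ht₀]; field_simp
  unfold GG
  rw [hpow]
  linear_combination (t₀ ^ (p - 1)) * hkey

lemma GG_at_zero (p α β : ℝ) (hp : (3:ℝ)/2 ≤ p) : GG p α β 0 = -β := by
  unfold GG
  rw [Real.zero_rpow (by linarith : p ≠ 0), Real.zero_rpow (by linarith : p - 1 ≠ 0)]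
  ring

lemma GG_large (p α β T : ℝ) (hp : (3:ℝ)/2 ≤ p) (hα : 0 < α) (hT1 : 1 ≤ T)
    (hTα : α ≤ T) : 1 - β ≤ GG p α β T := by
  have hT0 : 0 < T := by linarith
  have hpow : T ^ p = T ^ (p - 1) * T := by
    have := rpow_succ_aux T (p - 1) hT0
    rw [show p - 1 + 1 = p by ring] at this
    exact this
  have h1 : 1 ≤ T ^ (p - 1) := Real.one_le_rpow hT1 (by linarith)
  unfold GG
  rw [hpow]
  have h2 : (1:ℝ) ≤ (p + 1) * T - α * p := by nlinarith
  nlinarith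

/-- **Positive zeros of `F_n` for `α > 0`, `β < 0` (Lemma solf, case `Δ₂ⁿ`/`𝒟₁₂ⁿ`/`𝒟₂₃ⁿ`).**
With `c = αⁿ (n−2)^{n−2}/(n+2)^{n−2}`: if `β² > c` there is no zero `t > 0`; if
`β² = c` there is exactly one, `t = α(n−2)/(n+2)`; if `β² < c` there are exactly two. -/
theorem Fn_positive_zeros_alpha_pos_beta_neg
    (n : ℕ) (hn : 3 ≤ n)
    (α β : ℝ) (hα : 0 < α) (hβ : β < 0)
    (c : ℝ) (hc : c = α ^ n * ((n : ℝ) - 2) ^ (n - 2) / ((n : ℝ) + 2) ^ (n - 2)) :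
    (β ^ 2 > c → ¬ ∃ t : ℝ, 0 < t ∧ FF n α β t = 0)
    ∧ (β ^ 2 = c → ∀ t : ℝ, (0 < t ∧ FF n α β t = 0) ↔ t = α * ((n : ℝ) - 2) / ((n : ℝ) + 2))
    ∧ (β ^ 2 < c → {t : ℝ | 0 < t ∧ FF n α β t = 0}.encard = 2) := by
  have hn' : (3:ℝ) ≤ (n:ℝ) := by exact_mod_cast hn
  set p : ℝ := (n : ℝ) / 2 with hpdef
  have hp : (3:ℝ)/2 ≤ p := by rw [hpdef]; linarith
  set t₀ : ℝ := α * (p - 1) / (p + 1) with ht₀def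
  have ht₀eq : t₀ = α * ((n : ℝ) - 2) / ((n : ℝ) + 2) := by
    rw [ht₀def, hpdef]
    field_simp
  have ht₀pos : 0 < t₀ := by
    rw [ht₀def]; exact div_pos (mul_pos hα (by linarith)) (by linarith)
  set G : ℝ → ℝ := GG p α β with hGdef
  have hFG : FF n α β = G := FF_eq_GG n α β
  have hanti : StrictAntiOn G (Icc 0 t₀) := GG_strictAntiOn p α β hp hα
  have hmono : StrictMonoOn G (Ici t₀) := GG_strictMonoOn p α β hp hα
  have hGt₀ : G t₀ = -(α * t₀ ^ (p - 1)) - β := GG_at_min p α β hp hα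
  have hG0 : G 0 = -β := GG_at_zero p α β hp
  set M : ℝ := α * t₀ ^ (p - 1) with hMdef
  have hMpos : 0 < M := mul_pos hα (Real.rpow_pos_of_pos ht₀pos _)
  -- c = M ^ 2
  have hcM : c = M ^ 2 := by
    have hcast : ((n - 2 : ℕ) : ℝ) = (n:ℝ) - 2 := by
      have h2 : (2:ℕ) ≤ n := by omega
      push_cast [Nat.cast_sub h2]
      ring
    have h3 : t₀ ^ (p - 1) * t₀ ^ (p - 1) = t₀ ^ (n - 2 : ℕ) := by
      rw [← Real.rpow_natCast t₀ (n - 2), hcast, ← Real.rpow_add ht₀pos]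
      congr 1
      rw [hpdef]; ring
    have hαpow : α ^ 2 * α ^ (n - 2 : ℕ) = α ^ n := by
      rw [← pow_add]
      congr 1
      omega
    have h4 : M ^ 2 = α ^ 2 * (t₀ ^ (p - 1) * t₀ ^ (p - 1)) := by
      rw [hMdef]; ring
    rw [h4, h3, ht₀eq, div_pow, mul_pow, hc, ← hαpow]
    ring
  -- the three cases
  refine ⟨?_, ?_, ?_⟩
  · -- β² > c : no zero
    rintro hgt ⟨t, ht, hFt⟩
    rw [hFG] at hFt
    have hGt₀pos : 0 < G t₀ := by
      rw [hGt₀]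
      nlinarith [hcM, hMpos, hβ]
    rcases le_or_gt t t₀ with h | h
    · have := hanti.antitoneOn ⟨ht.le, h⟩ ⟨ht₀pos.le, le_refl t₀⟩ h
      -- G t₀ ≤ G t
      linarith [hFt ▸ this]
    · have := hmono Set.self_mem_Ici h.le h
      linarith [hFt ▸ this]
  · -- β² = c : unique zero t₀
    intro heq t
    have hGt₀zero : G t₀ = 0 := by
      rw [hGt₀]
      nlinarith [hcM, hMpos, hβ]
    constructor
    · rintro ⟨ht, hFt⟩
      rw [hFG] at hFt
      rw [← ht₀eq]
      by_contra hne
      rcases lt_or_gt_of_ne hne with h | h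
      · have := hanti ⟨ht.le, h.le⟩ ⟨ht₀pos.le, le_refl t₀⟩ h
        linarith [hFt, hGt₀zero]
      · have := hmono (le_refl t₀ : t₀ ∈ Ici t₀) (le_of_lt h : t ∈ Ici t₀) h
        linarith [hFt, hGt₀zero]
    · rintro rfl
      rw [← ht₀eq, hFG]
      exact ⟨ht₀pos, hGt₀zero⟩
  · -- β² < c : exactly two zeros
    intro hlt
    have hGt₀neg : G t₀ < 0 := by
      rw [hGt₀]
      nlinarith [hcM, hMpos, hβ]
    have hcont : Continuous G := GG_continuous p α β hp
    -- first zero in (0, t₀)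
    obtain ⟨z₁, hz₁mem, hz₁⟩ : ∃ z ∈ Ioo (0:ℝ) t₀, G z = 0 := by
      have hiv := intermediate_value_Ioo' (le_of_lt ht₀pos) hcont.continuousOn
        (a := 0) (b := t₀)
      have h0mem : (0:ℝ) ∈ Ioo (G t₀) (G 0) := by
        rw [hG0]; exact ⟨hGt₀neg, by linarith⟩
      obtain ⟨z, hzmem, hz⟩ := hiv h0mem
      exact ⟨z, hzmem, hz⟩
    -- second zero in (t₀, T)
    set T : ℝ := max 1 (max α (t₀ + 1)) with hTdef
    have hT1 : 1 ≤ T := le_max_left _ _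
    have hTα : α ≤ T := le_trans (le_max_left _ _) (le_max_right _ _)
    have hTt₀ : t₀ ≤ T := by
      have : t₀ + 1 ≤ T := le_trans (le_max_right _ _) (le_max_right _ _)
      linarith
    have hGT : 0 < G T := by
      have := GG_large p α β T hp hα hT1 hTα
      linarith
    obtain ⟨z₂, hz₂mem, hz₂⟩ : ∃ z ∈ Ioo t₀ T, G z = 0 := by
      have hiv := intermediate_value_Ioo hTt₀ hcont.continuousOn (a := t₀) (b := T)
      have h0mem : (0:ℝ) ∈ Ioo (G t₀) (G T) := ⟨hGt₀neg, hGT⟩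
      obtain ⟨z, hzmem, hz⟩ := hiv h0mem
      exact ⟨z, hzmem, hz⟩
    have hset : {t : ℝ | 0 < t ∧ FF n α β t = 0} = {z₁, z₂} := by
      ext t
      simp only [mem_setOf_eq, mem_insert_iff, mem_singleton_iff, hFG]
      constructor
      · rintro ⟨ht, hGt⟩
        rcases le_or_gt t t₀ with h | h
        · left
          exact hanti.injOn ⟨ht.le, h⟩ ⟨hz₁mem.1.le, hz₁mem.2.le⟩ (by rw [hGt, hz₁])
        · right
          exact hmono.injOn (le_of_lt h : t ∈ Ici t₀) (hz₂mem.1.le : z₂ ∈ Ici t₀)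
            (by rw [hGt, hz₂])
      · rintro (rfl | rfl)
        · exact ⟨hz₁mem.1, hz₁⟩
        · exact ⟨lt_trans ht₀pos hz₂mem.1, hz₂⟩
    rw [hset]
    exact Set.encard_pair (ne_of_lt (lt_trans hz₁mem.2 hz₂mem.1))
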